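/- Let k ≥ 2, N ≥ 2, and p_1 ≥ ... ≥ p_k > 0. In the minimization of Σ_{i=1}^k p_i (1-q_i)^N over the probability simplex, the minimizer can never be the vertex (q_1, ..., q_k) = (1, 0, ..., 0) unless k = 1; i.e., for k ≥ 2 with p_2 > 0 there exists a feasible point with strictly smaller objective than p_2 + p_3 + ... + p_k (the objective value at the vertex). -/

import Mathlib

theorem vertex_never_minimizer (N k : ℕ) (hN : 2 ≤ N) (hk : 2 ≤ k)
    (p : Fin k → ℝ) (hp : ∀ i, 0 < p i)
    (hpmono : ∀ i j : Fin k, i ≤ j → p j ≤ p i) :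
    ∃ r : Fin k → ℝ, (∀ i, 0 ≤ r i) ∧ ∑ i, r i = 1 ∧
      ∑ i, p i * (1 - r i) ^ N <
        ∑ i, p i * (1 - (if i = (⟨0, by omega⟩ : Fin k) then (1:ℝ) else 0)) ^ N := by
  set i0 : Fin k := ⟨0, by omega⟩ with hi0
  set i1 : Fin k := ⟨1, by omega⟩ with hi1
  have hne : i1 ≠ i0 := by simp [hi0, hi1, Fin.ext_iff]
  have hp0 := hp i0
  have hp1 := hp i1
  have hp10 : p i1 ≤ p i0 := hpmono i0 i1 (by simp [hi0, hi1, Fin.le_def])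
  set δ : ℝ := p i1 / (2 * p i0) with hδ
  have hδpos : 0 < δ := by positivity
  have hδhalf : δ ≤ 1 / 2 := by
    rw [hδ, div_le_div_iff₀ (by positivity) (by norm_num)]
    nlinarith
  have hδ1 : δ ≤ 1 := by linarith
  set r : Fin k → ℝ := fun i => if i = i0 then 1 - δ else if i = i1 then δ else 0 with hr
  have hsum : ∀ f : Fin k → ℝ,
      ∑ i, f i = f i0 + f i1 + ∑ i ∈ (Finset.univ.erase i0).erase i1, f i := by
    intro f
    rw [← Finset.add_sum_erase _ f (Finset.mem_univ i0),
      ← Finset.add_sum_erase _ f (show i1 ∈ Finset.univ.erase i0 by simp [hne])]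
    ring
  refine ⟨r, ?_, ?_, ?_⟩
  · intro i
    simp only [hr]
    split_ifs <;> linarith
  · rw [hsum r]
    have h0 : r i0 = 1 - δ := by simp [hr]
    have h1 : r i1 = δ := by simp [hr, hne]
    have hz : ∑ i ∈ (Finset.univ.erase i0).erase i1, r i = 0 := by
      apply Finset.sum_eq_zero
      intro i hi
      simp only [Finset.mem_erase] at hi
      simp [hr, hi.1, hi.2.1]
    rw [h0, h1, hz]; ring
  · rw [hsum fun i => p i * (1 - r i) ^ N,
      hsum fun i => p i * (1 - (if i = i0 then (1:ℝ) else 0)) ^ N]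
    have htail : ∑ i ∈ (Finset.univ.erase i0).erase i1, p i * (1 - r i) ^ N
        = ∑ i ∈ (Finset.univ.erase i0).erase i1,
            p i * (1 - (if i = i0 then (1:ℝ) else 0)) ^ N := by
      apply Finset.sum_congr rfl
      intro i hi
      simp only [Finset.mem_erase] at hi
      simp [hr, hi.1, hi.2.1]
    rw [htail]
    have h0 : r i0 = 1 - δ := by simp [hr]
    have h1 : r i1 = δ := by simp [hr, hne]
    rw [h0, h1]
    have hNpos : N ≠ 0 := by omega
    simp only [if_pos rfl, if_neg hne, if_true, eq_self_iff_true, sub_self, zero_pow hNpos, mul_zero, sub_zero, one_pow,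
      mul_one, sub_sub_cancel]
    -- goal: p i0 * δ^N + p i1 * (1-δ)^N + S < 0 + p i1 + S  (roughly)
    have key : p i0 * δ ^ N + p i1 * (1 - δ) ^ N < p i1 := by
      have hd2 : δ ^ N ≤ δ ^ 2 := pow_le_pow_of_le_one hδpos.le hδ1 hN
      have hd3 : (1 - δ) ^ N ≤ (1 - δ) ^ 1 :=
        pow_le_pow_of_le_one (by linarith) (by linarith) (by omega)
      have h0δ : p i0 * δ = p i1 / 2 := by
        rw [hδ]; field_simp
      have : p i0 * δ ^ 2 = (p i1 / 2) * δ := by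
        rw [← h0δ]; ring
      nlinarith [pow_le_pow_of_le_one hδpos.le hδ1 hN, hp1]
    linarith
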